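/- arXiv:1311.4357 — 3 statements merged into one kernel-verified Lean document; each statement's English description precedes it below -/
import Mathlib

section
/- Let I be a closed arc in the unit circle ∂𝔻 with an open neighborhood U ⊂ ℂ, and let χ : U ∩ cl(𝔻) → ℂ be a continuous function satisfying δ < |χ(z)| < 1 − δ for some 0 < δ < 1. Then there exists N ∈ ℕ such that for every k ≥ N the equation z^k = χ(z) has at least k·|I| solutions in U ∩ cl(𝔻), where |I| denotes the normalized arc length of I. -/
/-!
Near the arc, write `z = r * exp (θ * I)` and take a continuous logarithm `F` of `χ` on the
polar rectangle `[1 - η, 1] × [a - η, b + η]`, which exists because the rectangle is simply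
connected. Then `z ^ k = χ z` amounts to `r ^ k = exp (re F)` together with
`k θ = im F + 2πn` for some integer `n`. As `im F` is bounded and `(1 - η) ^ k < δ < |χ| < 1` for
large `k`, every `n` in a window of about `k (b - a + 2η) / (2π) - O(1)` integers yields a
solution, by the Poincaré–Miranda theorem on a thin subrectangle; distinct `n` give distinct `z`
because the angular width is below `2π`.
-/

open Complex Metric Set Filter Topology
open scoped Real

theorem ContinuousOn.exists_exp_eq_of_simplyConnected {X : Type*} [TopologicalSpace X]
    {s : Set X} [SimplyConnectedSpace s] [LocallyPathConnectedSpace s] {g : X → ℂ}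
    (hg : ContinuousOn g s) (hg0 : ∀ x ∈ s, g x ≠ 0) :
    ∃ F : X → ℂ, ContinuousOn F s ∧ ∀ x ∈ s, exp (F x) = g x := by
  classical
  obtain ⟨x₀⟩ := (inferInstance : Nonempty s)
  obtain ⟨F, ⟨-, hF⟩, -⟩ := isCoveringMapOn_exp.existsUnique_continuousMap_lifts
    ⟨s.domRestrict g, hg.domRestrict⟩ (a₀ := x₀) (exp_log (hg0 x₀ x₀.2)) (fun x => hg0 x x.2)
  refine ⟨fun x => if hx : x ∈ s then F ⟨x, hx⟩ else 0, ?_, fun x hx => ?_⟩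
  · rw [continuousOn_iff_continuous_domRestrict]
    convert F.continuous with x
    simp
  · simp only [dif_pos hx]
    exact congrFun hF ⟨x, hx⟩

theorem ContinuousOn.exists_exp_eq_of_convex {E : Type*} [AddCommGroup E] [Module ℝ E]
    [TopologicalSpace E] [IsTopologicalAddGroup E] [ContinuousSMul ℝ E] [LocallyConvexSpace ℝ E]
    {s : Set E} {g : E → ℂ} (hg : ContinuousOn g s) (hs : Convex ℝ s) (hg0 : ∀ x ∈ s, g x ≠ 0) :
    ∃ F : E → ℂ, ContinuousOn F s ∧ ∀ x ∈ s, exp (F x) = g x := by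
  rcases s.eq_empty_or_nonempty with rfl | hne
  · exact ⟨0, continuousOn_empty _, fun x hx => hx.elim⟩
  have := hs.contractibleSpace hne
  have := hs.locallyPathConnectedSpace
  exact hg.exists_exp_eq_of_simplyConnected hg0

theorem IsPreconnected.im_lt_im_of_im_exp_pos {X : Type*} [TopologicalSpace X] {s : Set X}
    (hs : IsPreconnected s) {F : X → ℂ} (hF : ContinuousOn F s)
    (him : ∀ x ∈ s, 0 < (exp (F x)).im) {p q : X} (hp : p ∈ s) (hq : q ∈ s)
    (hpre : 0 < (exp (F p)).re) (hqre : (exp (F q)).re < 0) : (F p).im < (F q).im := by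
  -- `im F` and the continuous branch `arg ∘ exp ∘ F` differ by a locally constant element of `2πℤ`.
  have hwind : ∀ x, (F x).im - arg (exp (F x)) ∈ AddSubgroup.zmultiples (2 * π) := by
    intro x
    obtain ⟨n, hn⟩ := exp_eq_exp_iff_exists_int.mp (exp_log (exp_ne_zero (F x))).symm
    refine ⟨n, ?_⟩
    have := congrArg im hn
    simp only [add_im, log_im, mul_im, intCast_re, intCast_im, ofReal_re, ofReal_im] at this
    simp [zsmul_eq_mul, this]
  have hcont : ContinuousOn (fun x => (F x).im - arg (exp (F x))) s := by
    have hexp : ContinuousOn (fun x => exp (F x)) s := continuous_exp.comp_continuousOn hF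
    refine (continuous_im.comp_continuousOn hF).sub fun x hx => ?_
    exact ContinuousAt.comp_continuousWithinAt (g := arg) (continuousAt_arg (.inr (him x hx).ne'))
      (hexp x hx)
  have hconst := hs.constant_of_mapsTo
    (isDiscrete_iff_discreteTopology.mpr (NormedSpace.discreteTopology_zmultiples _))
    hcont (fun x _ => hwind x) hp hq
  have hargp : arg (exp (F p)) < π / 2 := arg_lt_pi_div_two_iff.mpr (.inl hpre)
  have hargq : π / 2 < arg (exp (F q)) := by
    by_contra! h
    rcases arg_le_pi_div_two_iff.mp h with h | h <;> linarith [him q hq]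
  linarith

theorem poincare_miranda {x₀ x₁ y₀ y₁ : ℝ} (hx : x₀ ≤ x₁) (hy : y₀ ≤ y₁) {f : ℝ × ℝ → ℂ}
    (hf : ContinuousOn f (Icc x₀ x₁ ×ˢ Icc y₀ y₁))
    (hleft : ∀ y ∈ Icc y₀ y₁, (f (x₀, y)).re < 0) (hright : ∀ y ∈ Icc y₀ y₁, 0 < (f (x₁, y)).re)
    (hbot : ∀ x ∈ Icc x₀ x₁, (f (x, y₀)).im < 0) (htop : ∀ x ∈ Icc x₀ x₁, 0 < (f (x, y₁)).im) :
    ∃ p ∈ Icc x₀ x₁ ×ˢ Icc y₀ y₁, f p = 0 := by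
  by_contra! hf0
  obtain ⟨F, hF, hFf⟩ :=
    hf.exists_exp_eq_of_convex ((convex_Icc x₀ x₁).prod (convex_Icc y₀ y₁)) hf0
  -- Along each edge `f` stays in a half-plane (rotated onto the upper one by `exp c`) and makes a
  -- quarter turn between the corners, so `im F` would strictly increase once around the boundary.
  have edge : ∀ (e : Set (ℝ × ℝ)) (c : ℂ), IsPreconnected e → e ⊆ Icc x₀ x₁ ×ˢ Icc y₀ y₁ →
      (∀ z ∈ e, 0 < (f z * exp c).im) → ∀ p ∈ e, ∀ q ∈ e,
      0 < (f p * exp c).re → (f q * exp c).re < 0 → (F p).im < (F q).im := by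
    intro e c he heR him p hp q hq hpre hqre
    have hexp : ∀ z ∈ e, exp (F z + c) = f z * exp c := fun z hz => by
      rw [exp_add, hFf z (heR hz)]
    have := he.im_lt_im_of_im_exp_pos (F := fun z => F z + c)
      ((hF.mono heR).add continuousOn_const) (fun z hz => hexp z hz ▸ him z hz) hp hq
      (hexp p hp ▸ hpre) (hexp q hq ▸ hqre)
    simpa using this
  have hx₀ : x₀ ∈ Icc x₀ x₁ := left_mem_Icc.mpr hx
  have hx₁ : x₁ ∈ Icc x₀ x₁ := right_mem_Icc.mpr hx
  have hy₀ : y₀ ∈ Icc y₀ y₁ := left_mem_Icc.mpr hy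
  have hy₁ : y₁ ∈ Icc y₀ y₁ := right_mem_Icc.mpr hy
  have hbotF := edge (Icc x₀ x₁ ×ˢ {y₀}) (π * I)
    (isPreconnected_Icc.prod isPreconnected_singleton) (prod_mono subset_rfl (by simpa))
    (by rintro ⟨x, _⟩ ⟨hx, rfl⟩; simpa [exp_pi_mul_I] using hbot x hx)
    (x₀, y₀) ⟨hx₀, rfl⟩ (x₁, y₀) ⟨hx₁, rfl⟩
    (by simpa [exp_pi_mul_I] using hleft y₀ hy₀) (by simpa [exp_pi_mul_I] using hright y₀ hy₀)
  have hrightF := edge ({x₁} ×ˢ Icc y₀ y₁) (π / 2 * I)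
    (isPreconnected_singleton.prod isPreconnected_Icc) (prod_mono (by simpa) subset_rfl)
    (by rintro ⟨_, y⟩ ⟨rfl, hy⟩; simpa [exp_pi_div_two_mul_I] using hright y hy)
    (x₁, y₀) ⟨rfl, hy₀⟩ (x₁, y₁) ⟨rfl, hy₁⟩
    (by simpa [exp_pi_div_two_mul_I] using hbot x₁ hx₁)
    (by simpa [exp_pi_div_two_mul_I] using htop x₁ hx₁)
  have htopF := edge (Icc x₀ x₁ ×ˢ {y₁}) 0
    (isPreconnected_Icc.prod isPreconnected_singleton) (prod_mono subset_rfl (by simpa))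
    (by rintro ⟨x, _⟩ ⟨hx, rfl⟩; simpa using htop x hx)
    (x₁, y₁) ⟨hx₁, rfl⟩ (x₀, y₁) ⟨hx₀, rfl⟩
    (by simpa using hright y₁ hy₁) (by simpa using hleft y₁ hy₁)
  have hleftF := edge ({x₀} ×ˢ Icc y₀ y₁) (-π / 2 * I)
    (isPreconnected_singleton.prod isPreconnected_Icc) (prod_mono (by simpa) subset_rfl)
    (by rintro ⟨_, y⟩ ⟨rfl, hy⟩; simpa [exp_neg_pi_div_two_mul_I] using hleft y hy)
    (x₀, y₁) ⟨rfl, hy₁⟩ (x₀, y₀) ⟨rfl, hy₀⟩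
    (by simpa [exp_neg_pi_div_two_mul_I] using htop x₀ hx₀)
    (by simpa [exp_neg_pi_div_two_mul_I] using hbot x₀ hx₀)
  linarith

theorem Complex.polarCoord_symm_eq_mul_exp (p : ℝ × ℝ) :
    Complex.polarCoord.symm p = p.1 * exp (p.2 * I) := by
  rw [Complex.polarCoord_symm_apply, exp_mul_I, ← ofReal_cos, ← ofReal_sin]

theorem Complex.continuous_polarCoord_symm : Continuous Complex.polarCoord.symm := by
  simp_rw [funext Complex.polarCoord_symm_eq_mul_exp]
  fun_prop

theorem Complex.polarCoord_symm_pow (p : ℝ × ℝ) (k : ℕ) :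
    Complex.polarCoord.symm p ^ k = Complex.polarCoord.symm (p.1 ^ k, k * p.2) := by
  simp only [Complex.polarCoord_symm_eq_mul_exp, mul_pow, ← exp_nat_mul]
  push_cast
  ring_nf

theorem Complex.polarCoord_symm_add_int_mul_two_pi (r θ : ℝ) (n : ℤ) :
    Complex.polarCoord.symm (r, θ + n * (2 * π)) = Complex.polarCoord.symm (r, θ) := by
  simp only [Complex.polarCoord_symm_eq_mul_exp]
  push_cast
  rw [add_mul, exp_add, mul_assoc, exp_int_mul_two_pi_mul_I, mul_one]

theorem Complex.exp_eq_polarCoord_symm (w : ℂ) :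
    exp w = Complex.polarCoord.symm (Real.exp w.re, w.im) := by
  rw [Complex.polarCoord_symm_eq_mul_exp, ofReal_exp, ← exp_add, re_add_im]

theorem Complex.injOn_polarCoord_symm {α β : ℝ} (h : β - α < 2 * π) :
    InjOn Complex.polarCoord.symm (Ioi 0 ×ˢ Icc α β) := by
  rintro ⟨r, θ⟩ ⟨hr, hθ⟩ ⟨r', θ'⟩ ⟨hr', hθ'⟩ heq
  have hrr' : r = r' := by
    have := congrArg norm heq
    rwa [norm_polarCoord_symm, norm_polarCoord_symm, abs_of_pos (mem_Ioi.mp hr),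
      abs_of_pos (mem_Ioi.mp hr')] at this
  subst hrr'
  rw [Complex.polarCoord_symm_eq_mul_exp, Complex.polarCoord_symm_eq_mul_exp,
    mul_right_inj' (ofReal_ne_zero.mpr hr.ne')] at heq
  exact Prod.ext rfl (Circle.exp_injOn_Icc h hθ hθ' (Circle.ext heq))

theorem eventually_polarCoord_symm_Icc_prod_Icc_subset {a b : ℝ} (hab : a ≤ b) {U : Set ℂ}
    (hU : IsOpen U) (hIU : (fun t : ℝ => exp (t * I)) '' Icc a b ⊆ U) :
    ∀ᶠ η in 𝓝[>] 0, Icc (1 - η) 1 ×ˢ Icc (a - η) (b + η) ⊆ Complex.polarCoord.symm ⁻¹' U := by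
  have hK : {1} ×ˢ Icc a b ⊆ Complex.polarCoord.symm ⁻¹' U := by
    rintro ⟨_, t⟩ ⟨rfl, ht⟩
    simpa only [mem_preimage, Complex.polarCoord_symm_eq_mul_exp, ofReal_one, one_mul]
      using hIU (mem_image_of_mem _ ht)
  obtain ⟨ε, hε, hεU⟩ := (isCompact_singleton.prod isCompact_Icc).exists_cthickening_subset_open
    (hU.preimage Complex.continuous_polarCoord_symm) hK
  filter_upwards [Ioc_mem_nhdsGT hε] with η ⟨hη, hηε⟩
  rintro ⟨r, t⟩ ⟨⟨hr, hr1⟩, ⟨ht, ht'⟩⟩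
  refine hεU (mem_cthickening_of_dist_le _ ((1 : ℝ), (projIcc a b hab t : ℝ)) _ _
    (mk_mem_prod (mem_singleton 1) (Subtype.prop _)) ?_)
  rw [Prod.dist_eq, Real.dist_eq, Real.dist_eq, coe_projIcc]
  have hmax : max a (min b t) ≤ max a t := max_le_max le_rfl (min_le_right b t)
  have hmin := le_max_right a (min b t)
  refine max_le (abs_le.mpr ⟨by linarith, by linarith⟩) (abs_le.mpr ⟨?_, ?_⟩)
  · rcases max_choice a t with h | h <;> linarith
  · rcases min_choice b t with h | h <;> linarith

theorem exists_polarCoord_symm_pow_eq_exp {ρ α β M : ℝ} {k : ℕ} {F : ℝ × ℝ → ℂ} (hρ : ρ ≤ 1)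
    (hk : 0 < k) (hM : 0 ≤ M) (hF : ContinuousOn F (Icc ρ 1 ×ˢ Icc α β))
    (hFim : ∀ p ∈ Icc ρ 1 ×ˢ Icc α β, |(F p).im| < M)
    (hFre : ∀ p ∈ Icc ρ 1 ×ˢ Icc α β, ρ ^ k < Real.exp (F p).re ∧ Real.exp (F p).re < 1)
    {n : ℤ} (hα : k * α + M ≤ n * (2 * π)) (hβ : n * (2 * π) ≤ k * β - M) :
    ∃ p ∈ Icc ρ 1 ×ˢ Icc α β, k * p.2 = (F p).im + n * (2 * π) ∧
      Complex.polarCoord.symm p ^ k = exp (F p) := by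
  have hk' : (0 : ℝ) < k := Nat.cast_pos.mpr hk
  set θ₀ := n * (2 * π)
  have hsub : Icc ρ 1 ×ˢ Icc ((θ₀ - M) / k) ((θ₀ + M) / k) ⊆ Icc ρ 1 ×ˢ Icc α β := by
    refine prod_mono subset_rfl (Icc_subset_Icc ?_ ?_)
    · rw [le_div_iff₀ hk']; linarith
    · rw [div_le_iff₀ hk']; linarith
  have hθ : (θ₀ - M) / k ≤ (θ₀ + M) / k := by gcongr; linarith
  obtain ⟨p, hp, hp0⟩ := poincare_miranda hρ hθ
    (f := fun p => ⟨p.1 ^ k - Real.exp (F p).re, k * p.2 - (F p).im - θ₀⟩)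
    (by
      simp_rw [Complex.mk_eq_add_mul_I]
      have := hF.mono hsub
      fun_prop)
    (fun θ hθ => by
      have := hFre _ (hsub (mk_mem_prod (left_mem_Icc.mpr hρ) hθ))
      dsimp only; linarith)
    (fun θ hθ => by
      have := hFre _ (hsub (mk_mem_prod (right_mem_Icc.mpr hρ) hθ))
      dsimp only; rw [one_pow]; linarith)
    (fun r hr => by
      have := abs_lt.mp (hFim _ (hsub (mk_mem_prod hr (left_mem_Icc.mpr hθ))))
      dsimp only; rw [mul_div_cancel₀ _ hk'.ne']; linarith)
    (fun r hr => by
      have := abs_lt.mp (hFim _ (hsub (mk_mem_prod hr (right_mem_Icc.mpr hθ))))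
      dsimp only; rw [mul_div_cancel₀ _ hk'.ne']; linarith)
  obtain ⟨hre, him⟩ := Complex.ext_iff.mp hp0
  dsimp only [zero_re, zero_im] at hre him
  have hθp : k * p.2 = (F p).im + θ₀ := by linarith
  have hrp : p.1 ^ k = Real.exp (F p).re := by linarith
  refine ⟨p, hsub hp, hθp, ?_⟩
  rw [Complex.polarCoord_symm_pow, hθp, hrp, Complex.polarCoord_symm_add_int_mul_two_pi,
    ← Complex.exp_eq_polarCoord_symm]

theorem sub_sub_one_le_card_Icc_ceil_floor (A B : ℝ) :
    B - A - 1 ≤ (Finset.Icc ⌈A⌉ ⌊B⌋).card := by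
  rw [Int.card_Icc]
  calc B - A - 1 ≤ ((⌊B⌋ + 1 - ⌈A⌉ : ℤ) : ℝ) := by
        push_cast; linarith [Int.sub_one_lt_floor B, Int.ceil_lt_add_one A]
    _ ≤ ((⌊B⌋ + 1 - ⌈A⌉).toNat : ℝ) := by exact_mod_cast Int.self_le_toNat _

theorem exists_finset_polarCoord_symm_pow_eq_exp {ρ α β M : ℝ} {k : ℕ} {F : ℝ × ℝ → ℂ}
    (hρ₀ : 0 < ρ) (hρ : ρ ≤ 1) (hαβ : β - α < 2 * π) (hk : 0 < k) (hM : 0 ≤ M)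
    (hF : ContinuousOn F (Icc ρ 1 ×ˢ Icc α β))
    (hFim : ∀ p ∈ Icc ρ 1 ×ˢ Icc α β, |(F p).im| < M)
    (hFre : ∀ p ∈ Icc ρ 1 ×ˢ Icc α β, ρ ^ k < Real.exp (F p).re ∧ Real.exp (F p).re < 1) :
    ∃ S : Finset ℂ, (∀ z ∈ S, ∃ p ∈ Icc ρ 1 ×ˢ Icc α β,
        z = Complex.polarCoord.symm p ∧ z ^ k = exp (F p)) ∧
      (k * (β - α) - 2 * M) / (2 * π) - 1 ≤ S.card := by
  classical
  have h2π : 0 < 2 * π := Real.two_pi_pos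
  set A := (k * α + M) / (2 * π)
  set B := (k * β - M) / (2 * π)
  have hsol : ∀ n ∈ Finset.Icc ⌈A⌉ ⌊B⌋, ∃ p ∈ Icc ρ 1 ×ˢ Icc α β,
      k * p.2 = (F p).im + n * (2 * π) ∧ Complex.polarCoord.symm p ^ k = exp (F p) := by
    intro n hn
    rw [Finset.mem_Icc, Int.ceil_le, Int.le_floor, div_le_iff₀ h2π, le_div_iff₀ h2π] at hn
    exact exists_polarCoord_symm_pow_eq_exp hρ hk hM hF hFim hFre hn.1 hn.2
  choose! p hpQ hpθ hpk using hsol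
  refine ⟨(Finset.Icc ⌈A⌉ ⌊B⌋).image (Complex.polarCoord.symm ∘ p), ?_, ?_⟩
  · simp only [Finset.mem_image, Function.comp_apply]
    rintro _ ⟨n, hn, rfl⟩
    exact ⟨p n, hpQ n hn, rfl, hpk n hn⟩
  · have hQ : Icc ρ 1 ×ˢ Icc α β ⊆ Ioi 0 ×ˢ Icc α β :=
      prod_mono (fun r hr => hρ₀.trans_le hr.1) subset_rfl
    rw [Finset.card_image_of_injOn]
    · calc (k * (β - α) - 2 * M) / (2 * π) - 1 = B - A - 1 := by ring
        _ ≤ _ := sub_sub_one_le_card_Icc_ceil_floor A B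
    · intro m hm n hn hmn
      have hp : p m = p n := Complex.injOn_polarCoord_symm hαβ (hQ (hpQ m hm)) (hQ (hpQ n hn)) hmn
      have := hpθ m hm
      rw [hp, hpθ n hn, add_right_inj, mul_left_inj' h2π.ne'] at this
      exact_mod_cast this.symm

theorem eventually_exists_finset_polarCoord_symm_pow_eq_exp {ρ α β δ ε : ℝ} {F : ℝ × ℝ → ℂ}
    (hρ₀ : 0 < ρ) (hρ : ρ < 1) (hαβ : β - α < 2 * π) (hδ : 0 < δ) (hε : 0 < ε)
    (hF : ContinuousOn F (Icc ρ 1 ×ˢ Icc α β))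
    (hFre : ∀ p ∈ Icc ρ 1 ×ˢ Icc α β, δ < Real.exp (F p).re ∧ Real.exp (F p).re < 1) :
    ∀ᶠ k : ℕ in atTop, ∃ S : Finset ℂ, (∀ z ∈ S, ∃ p ∈ Icc ρ 1 ×ˢ Icc α β,
        z = Complex.polarCoord.symm p ∧ z ^ k = exp (F p)) ∧
      k * (β - α - ε) / (2 * π) ≤ S.card := by
  obtain ⟨C, hC⟩ := (isCompact_Icc.prod isCompact_Icc).exists_bound_of_continuousOn hF
  set M := |C| + 1
  have hM : 0 < M := by positivity
  have hFim : ∀ p ∈ Icc ρ 1 ×ˢ Icc α β, |(F p).im| < M := fun p hp =>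
    (abs_im_le_norm _).trans_lt ((hC p hp).trans_lt ((le_abs_self C).trans_lt (lt_add_one _)))
  filter_upwards [(tendsto_pow_atTop_nhds_zero_of_lt_one hρ₀.le hρ).eventually_lt_const hδ,
    tendsto_natCast_atTop_atTop.eventually_ge_atTop (2 * (M + π) / ε)] with k hpow hk
  rw [div_le_iff₀ hε] at hk
  have hk₀ : 0 < k := Nat.pos_of_ne_zero fun h => by
    simp only [h, Nat.cast_zero, zero_mul] at hk
    linarith [Real.pi_pos]
  obtain ⟨S, hS, hcard⟩ := exists_finset_polarCoord_symm_pow_eq_exp hρ₀ hρ.le hαβ hk₀ hM.le hF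
    hFim fun p hp => ⟨hpow.trans (hFre p hp).1, (hFre p hp).2⟩
  refine ⟨S, hS, le_trans ?_ hcard⟩
  rw [le_sub_iff_add_le, div_add_one Real.two_pi_pos.ne']
  gcongr
  linarith

theorem lelong_arc_solution_count_general
    (a b : ℝ) (hab : a ≤ b) (hlen : b - a < 2 * Real.pi)
    (I U : Set ℂ)
    (hI : I = (fun t : ℝ => Complex.exp (t * Complex.I)) '' Set.Icc a b)
    (hU : IsOpen U) (hIU : I ⊆ U)
    (χ : ℂ → ℂ) (hχ : ContinuousOn χ (U ∩ closedBall 0 1))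
    (δ : ℝ) (hδ0 : 0 < δ)
    (hχbound : ∀ z ∈ U ∩ closedBall (0 : ℂ) 1,
      δ < ‖χ z‖ ∧ ‖χ z‖ < 1 - δ) :
    ∃ N : ℕ, ∀ k : ℕ, N ≤ k →
      ∃ S : Finset ℂ, (↑S : Set ℂ) ⊆ U ∩ closedBall (0 : ℂ) 1 ∧
        (∀ z ∈ S, z ^ k = χ z) ∧
        (k : ℝ) * ((b - a) / (2 * Real.pi)) ≤ (S.card : ℝ) := by
  obtain ⟨η, ⟨hηU, hη1, hηlen⟩, hη0⟩ :=
    (((eventually_polarCoord_symm_Icc_prod_Icc_subset hab hU (hI ▸ hIU)).and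
      (nhdsWithin_le_nhds ((eventually_lt_nhds one_pos).and
        (eventually_lt_nhds (by linarith : 0 < (2 * π - (b - a)) / 2))))).and
      self_mem_nhdsWithin).exists
  set Q := Icc (1 - η) 1 ×ˢ Icc (a - η) (b + η)
  have hQ : MapsTo Complex.polarCoord.symm Q (U ∩ closedBall 0 1) := fun p hp => by
    refine ⟨hηU hp, ?_⟩
    rw [mem_closedBall_zero_iff, norm_polarCoord_symm, abs_of_nonneg (by linarith [hp.1.1])]
    exact hp.1.2
  obtain ⟨F, hF, hFχ⟩ := (hχ.comp Complex.continuous_polarCoord_symm.continuousOn hQ)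
    |>.exists_exp_eq_of_convex ((convex_Icc _ _).prod (convex_Icc _ _)) fun p hp =>
      norm_pos_iff.mp (hδ0.trans (hχbound _ (hQ hp)).1)
  have hFre : ∀ p ∈ Q, δ < Real.exp (F p).re ∧ Real.exp (F p).re < 1 - δ := fun p hp => by
    rw [← norm_exp, hFχ p hp]
    exact hχbound _ (hQ hp)
  obtain ⟨N, hN⟩ := eventually_atTop.mp <| eventually_exists_finset_polarCoord_symm_pow_eq_exp
    (by linarith) (by linarith) (by linarith) hδ0 (by positivity : 0 < 2 * η) hF
    fun p hp => ⟨(hFre p hp).1, (hFre p hp).2.trans (by linarith)⟩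
  refine ⟨N, fun k hk => ?_⟩
  obtain ⟨S, hS, hcard⟩ := hN k hk
  refine ⟨S, fun z hz => ?_, fun z hz => ?_, ?_⟩
  · obtain ⟨p, hp, rfl, -⟩ := hS z hz
    exact hQ hp
  · obtain ⟨p, hp, rfl, hpk⟩ := hS z hz
    rw [hpk, hFχ p hp]
    rfl
  · convert hcard using 2
    ring

/-- Let `I` be a closed arc in the unit circle with an open neighborhood
`U ⊆ ℂ`, and `χ` continuous on `U ∩ cl 𝔻` with `δ < |χ| < 1 - δ` there. Then there is `N`
such that for every `k ≥ N` the equation `z ^ k = χ z` has at least `k * |I|` solutions in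
`U ∩ cl 𝔻`, where `|I| = (b - a) / (2π)` is the normalized arc length. -/
theorem lelong_arc_solution_count
    (a b : ℝ) (hab : a ≤ b) (hlen : b - a < 2 * Real.pi)
    (I U : Set ℂ)
    (hI : I = (fun t : ℝ => Complex.exp (t * Complex.I)) '' Set.Icc a b)
    (hU : IsOpen U) (hIU : I ⊆ U)
    (χ : ℂ → ℂ) (hχ : ContinuousOn χ (U ∩ closedBall 0 1))
    (δ : ℝ) (hδ0 : 0 < δ) (hδ1 : δ < 1)
    (hχbound : ∀ z ∈ U ∩ closedBall (0 : ℂ) 1,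
      δ < ‖χ z‖ ∧ ‖χ z‖ < 1 - δ) :
    ∃ N : ℕ, ∀ k : ℕ, N ≤ k →
      ∃ S : Finset ℂ, (↑S : Set ℂ) ⊆ U ∩ closedBall (0 : ℂ) 1 ∧
        (∀ z ∈ S, z ^ k = χ z) ∧
        (k : ℝ) * ((b - a) / (2 * Real.pi)) ≤ (S.card : ℝ) :=
  lelong_arc_solution_count_general a b hab hlen I U hI hU hIU χ hχ δ hδ0 hχbound
end

section
/- Let b ∈ 𝔻 \ {0} and 0 < b₀ < 1 with |b| ≤ b₀. The modified Cauchy–Green operator T_{0,b}(f)(z) = T(f)(z) − T(f)(0) − (z/b)[T(f)(b) − T(f)(0)] is a bounded linear operator from C^{k,β}(cl 𝔻) to C^{k+1,β}(cl 𝔻), with operator norm bounded uniformly in b for |b| ≤ b₀. -/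
open Complex Metric MeasureTheory

/-- The Cauchy–Green operator `T(f)(z) = (1/π) ∫_𝔻 f(ζ)/(z - ζ) dx dy`. -/
noncomputable def cauchyGreen (f : ℂ → ℂ) (z : ℂ) : ℂ :=
  (Real.pi : ℂ)⁻¹ * ∫ ζ in ball (0 : ℂ) 1, f ζ / (z - ζ)

/-- The modified Cauchy–Green operator
`T_{0,b}(f)(z) = T(f)(z) - T(f)(0) - (z/b)[T(f)(b) - T(f)(0)]`. -/
noncomputable def cauchyGreenMod (b : ℂ) (f : ℂ → ℂ) (z : ℂ) : ℂ :=
  cauchyGreen f z - cauchyGreen f 0 - (z / b) * (cauchyGreen f b - cauchyGreen f 0)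

/-- The values `‖D^i f (z)‖` for `i ≤ k`, `z ∈ cl 𝔻`. -/
def derivVals (k : ℕ) (f : ℂ → ℂ) : Set ℝ :=
  {x | ∃ i ≤ k, ∃ z ∈ closedBall (0 : ℂ) 1, x = ‖iteratedFDeriv ℝ i f z‖}

/-- The Hölder difference quotients of `D^k f` on `cl 𝔻`. -/
def holderVals (k : ℕ) (β : ℝ) (f : ℂ → ℂ) : Set ℝ :=
  {x | ∃ z ∈ closedBall (0 : ℂ) 1, ∃ w ∈ closedBall (0 : ℂ) 1, z ≠ w ∧
    x = ‖iteratedFDeriv ℝ k f z - iteratedFDeriv ℝ k f w‖ / ‖z - w‖ ^ β}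

/-- The `C^{k,β}(cl 𝔻)` Hölder norm. -/
noncomputable def holderNorm (k : ℕ) (β : ℝ) (f : ℂ → ℂ) : ℝ :=
  sSup (derivVals k f) + sSup (holderVals k β f)

/-- Membership in the Hölder space `C^{k,β}(cl 𝔻)`. -/
def MemHolderDisc (k : ℕ) (β : ℝ) (f : ℂ → ℂ) : Prop :=
  ContDiff ℝ (k : ℕ∞) f ∧ BddAbove (derivVals k f) ∧ BddAbove (holderVals k β f)

/-! `T_{0,b} f = T f - ℓ` for the affine function `ℓ z = T f 0 + z (T f b - T f 0) / b`.
Since `k + 1 ≥ 1`, the `(k+1)`-st derivative of `ℓ` is constant, so subtracting `ℓ` does not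
change the Hölder quotients of `T f`, while the lower derivatives of `ℓ` on the closed disc are
bounded by `‖T f 0‖ + ‖(T f b - T f 0) / b‖`. Both terms are at most the `C^{k+1}` sup part of
`‖T f‖` (the second by the mean value inequality on `[0, b] ⊆ cl 𝔻`), hence
`‖T_{0,b} f‖ ≤ 3 ‖T f‖ ≤ 3 M₀ ‖f‖` for every `‖b‖ ≤ 1`. -/

section Affine

variable {E F : Type*} [NormedAddCommGroup E] [NormedSpace ℝ E]
  [NormedAddCommGroup F] [NormedSpace ℝ F]

lemma fderiv_const_add_clm (a : F) (L : E →L[ℝ] F) :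
    (fderiv ℝ fun x => a + L x) = fun _ => L :=
  funext fun _ => (L.hasFDerivAt.const_add a).fderiv

lemma iteratedFDeriv_const_apply_eq (n : ℕ) (c : F) (x y : E) :
    iteratedFDeriv ℝ n (fun _ : E => c) x = iteratedFDeriv ℝ n (fun _ : E => c) y := by
  simpa using iteratedFDeriv_comp_add_right (f := fun _ : E => c) n (y - x) x

lemma iteratedFDeriv_succ_const_add_clm_apply_eq (n : ℕ) (a : F) (L : E →L[ℝ] F) (x y : E) :
    iteratedFDeriv ℝ (n + 1) (fun x => a + L x) x =
      iteratedFDeriv ℝ (n + 1) (fun x => a + L x) y := by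
  simp only [iteratedFDeriv_succ_eq_comp_right, Function.comp_apply, fderiv_const_add_clm,
    iteratedFDeriv_const_apply_eq n L x y]

lemma norm_iteratedFDeriv_const_add_clm_le (n : ℕ) (a : F) (L : E →L[ℝ] F) {x : E}
    (hx : ‖x‖ ≤ 1) : ‖iteratedFDeriv ℝ n (fun x => a + L x) x‖ ≤ ‖a‖ + ‖L‖ := by
  rcases n with _ | _ | n
  · calc ‖iteratedFDeriv ℝ 0 (fun x => a + L x) x‖ = ‖a + L x‖ := norm_iteratedFDeriv_zero
      _ ≤ ‖a‖ + ‖L‖ * ‖x‖ := (norm_add_le _ _).trans (add_le_add_right (L.le_opNorm x) _)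
      _ ≤ ‖a‖ + ‖L‖ := by gcongr; exact mul_le_of_le_one_right (norm_nonneg L) hx
  · simp
  · rw [← norm_iteratedFDeriv_fderiv, fderiv_const_add_clm, iteratedFDeriv_succ_const]
    simp only [Pi.zero_apply, norm_zero]
    positivity

end Affine

section HolderDisc

variable {n : ℕ} {β : ℝ} {g : ℂ → ℂ}

lemma norm_iteratedFDeriv_le_sSup_derivVals (hg : BddAbove (derivVals n g)) {i : ℕ} (hi : i ≤ n)
    {z : ℂ} (hz : z ∈ closedBall (0 : ℂ) 1) : ‖iteratedFDeriv ℝ i g z‖ ≤ sSup (derivVals n g) :=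
  le_csSup hg ⟨i, hi, z, hz, rfl⟩

lemma norm_le_sSup_derivVals (hg : BddAbove (derivVals n g)) {z : ℂ}
    (hz : z ∈ closedBall (0 : ℂ) 1) : ‖g z‖ ≤ sSup (derivVals n g) := by
  simpa using norm_iteratedFDeriv_le_sSup_derivVals hg n.zero_le hz

lemma sSup_derivVals_le_holderNorm : sSup (derivVals n g) ≤ holderNorm n β g := by
  refine le_add_of_nonneg_right (Real.sSup_nonneg ?_)
  rintro _ ⟨z, -, w, -, -, rfl⟩
  positivity

lemma norm_slope_le_sSup_derivVals (hg : MemHolderDisc (n + 1) β g) {b : ℂ} (hb : ‖b‖ ≤ 1) :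
    ‖(g b - g 0) / b‖ ≤ sSup (derivVals (n + 1) g) := by
  obtain ⟨hgC, hgD, -⟩ := hg
  have hderiv : ∀ x ∈ closedBall (0 : ℂ) 1, ‖fderiv ℝ g x‖ ≤ sSup (derivVals (n + 1) g) :=
    fun x hx => by simpa using norm_iteratedFDeriv_le_sSup_derivVals hgD n.succ_pos hx
  have hmvt : ‖g b - g 0‖ ≤ sSup (derivVals (n + 1) g) * ‖b - 0‖ :=
    (convex_closedBall (0 : ℂ) 1).norm_image_sub_le_of_norm_fderiv_le
      (fun x _ => (hgC.differentiable (by simp)).differentiableAt) hderiv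
      (mem_closedBall_self zero_le_one) (by simpa using hb)
  rcases eq_or_ne b 0 with rfl | hb0
  · simpa using (norm_nonneg _).trans (norm_le_sSup_derivVals hgD (mem_closedBall_self zero_le_one))
  · rw [norm_div, div_le_iff₀ (norm_pos_iff.mpr hb0)]
    simpa using hmvt

lemma holderVals_sub_const_add_clm (hg : ContDiff ℝ (n + 1 : ℕ) g) (a : ℂ) (L : ℂ →L[ℝ] ℂ) :
    holderVals (n + 1) β (fun z => g z - (a + L z)) = holderVals (n + 1) β g := by
  have hdiff : ∀ z w, iteratedFDeriv ℝ (n + 1) (fun z => g z - (a + L z)) z -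
      iteratedFDeriv ℝ (n + 1) (fun z => g z - (a + L z)) w =
      iteratedFDeriv ℝ (n + 1) g z - iteratedFDeriv ℝ (n + 1) g w := by
    intro z w
    have hℓ : ContDiff ℝ (n + 1 : ℕ) (fun z => a + L z) := contDiff_const.add L.contDiff
    rw [fun_iteratedFDeriv_sub_apply hg.contDiffAt hℓ.contDiffAt,
      fun_iteratedFDeriv_sub_apply hg.contDiffAt hℓ.contDiffAt,
      iteratedFDeriv_succ_const_add_clm_apply_eq n a L z w]
    abel
  ext x
  simp only [holderVals, Set.mem_ofPred_eq, hdiff]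

theorem MemHolderDisc.sub_const_add_clm (hg : MemHolderDisc (n + 1) β g) (a : ℂ)
    (L : ℂ →L[ℝ] ℂ) :
    MemHolderDisc (n + 1) β (fun z => g z - (a + L z)) ∧
      holderNorm (n + 1) β (fun z => g z - (a + L z)) ≤ holderNorm (n + 1) β g + (‖a‖ + ‖L‖) := by
  obtain ⟨hgC, hgD, hgH⟩ := hg
  have hℓ : ContDiff ℝ (n + 1 : ℕ) (fun z => a + L z) := contDiff_const.add L.contDiff
  have hbound : ∀ x ∈ derivVals (n + 1) (fun z => g z - (a + L z)),
      x ≤ sSup (derivVals (n + 1) g) + (‖a‖ + ‖L‖) := by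
    rintro _ ⟨i, hi, z, hz, rfl⟩
    have hi' : (i : WithTop ℕ∞) ≤ (n + 1 : ℕ) := by exact_mod_cast hi
    rw [fun_iteratedFDeriv_sub_apply (hgC.of_le hi').contDiffAt (hℓ.of_le hi').contDiffAt]
    exact (norm_sub_le _ _).trans (add_le_add (norm_iteratedFDeriv_le_sSup_derivVals hgD hi hz)
      (norm_iteratedFDeriv_const_add_clm_le i a L (by simpa using hz)))
  have hH : holderVals (n + 1) β (fun z => g z - (a + L z)) = holderVals (n + 1) β g :=
    holderVals_sub_const_add_clm hgC a L
  have hD : sSup (derivVals (n + 1) (fun z => g z - (a + L z))) ≤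
      sSup (derivVals (n + 1) g) + (‖a‖ + ‖L‖) :=
    csSup_le ⟨_, 0, (n + 1).zero_le, 0, mem_closedBall_self zero_le_one, rfl⟩ hbound
  refine ⟨⟨hgC.sub hℓ, ⟨_, hbound⟩, hH ▸ hgH⟩, ?_⟩
  rw [holderNorm, holderNorm, hH]
  linarith

end HolderDisc

lemma cauchyGreenMod_eq_sub_const_add_clm (b : ℂ) (f : ℂ → ℂ) :
    cauchyGreenMod b f = fun z => cauchyGreen f z - (cauchyGreen f 0 +
      ContinuousLinearMap.mul ℝ ℂ ((cauchyGreen f b - cauchyGreen f 0) / b) z) := by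
  funext z
  simp only [cauchyGreenMod, ContinuousLinearMap.mul_apply']
  ring

lemma cauchyGreenMod_memHolderDisc {n : ℕ} {β : ℝ} {f : ℂ → ℂ}
    (hT : MemHolderDisc (n + 1) β (cauchyGreen f)) {b : ℂ} (hb : ‖b‖ ≤ 1) :
    MemHolderDisc (n + 1) β (cauchyGreenMod b f) ∧
      holderNorm (n + 1) β (cauchyGreenMod b f) ≤ 3 * holderNorm (n + 1) β (cauchyGreen f) := by
  rw [cauchyGreenMod_eq_sub_const_add_clm]
  refine (hT.sub_const_add_clm _ _).imp_right fun h => h.trans ?_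
  have hT0 := norm_le_sSup_derivVals hT.2.1 (mem_closedBall_self zero_le_one)
  have hslope := (ContinuousLinearMap.opNorm_mul_apply_le ℝ ℂ _).trans
    (norm_slope_le_sSup_derivVals hT hb)
  have hS : sSup (derivVals (n + 1) (cauchyGreen f)) ≤ holderNorm (n + 1) β (cauchyGreen f) :=
    sSup_derivVals_le_holderNorm
  linarith

lemma cauchyGreen_add {f g : ℂ → ℂ} {z : ℂ}
    (hf : IntegrableOn (fun ζ => f ζ / (z - ζ)) (ball (0 : ℂ) 1))
    (hg : IntegrableOn (fun ζ => g ζ / (z - ζ)) (ball (0 : ℂ) 1)) :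
    cauchyGreen (f + g) z = cauchyGreen f z + cauchyGreen g z := by
  simp only [cauchyGreen, Pi.add_apply, add_div, integral_add hf hg, mul_add]

lemma cauchyGreen_smul (a : ℂ) (f : ℂ → ℂ) (z : ℂ) :
    cauchyGreen (a • f) z = a * cauchyGreen f z := by
  simp only [cauchyGreen, Pi.smul_apply, smul_eq_mul, mul_div_assoc, integral_const_mul]
  ring

lemma cauchyGreenMod_add (b : ℂ) {f g : ℂ → ℂ}
    (hf : ∀ z : ℂ, IntegrableOn (fun ζ => f ζ / (z - ζ)) (ball (0 : ℂ) 1))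
    (hg : ∀ z : ℂ, IntegrableOn (fun ζ => g ζ / (z - ζ)) (ball (0 : ℂ) 1)) (z : ℂ) :
    cauchyGreenMod b (f + g) z = cauchyGreenMod b f z + cauchyGreenMod b g z := by
  simp only [cauchyGreenMod, cauchyGreen_add (hf _) (hg _)]
  ring

lemma cauchyGreenMod_smul (b a : ℂ) (f : ℂ → ℂ) (z : ℂ) :
    cauchyGreenMod b (a • f) z = a * cauchyGreenMod b f z := by
  simp only [cauchyGreenMod, cauchyGreen_smul]
  ring

theorem cauchyGreenMod_bounded_general
    (k : ℕ) (β b₀ : ℝ) (hb₀1 : b₀ < 1)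
    (hVekua : ∃ M₀ > 0, ∀ f : ℂ → ℂ, MemHolderDisc k β f →
      MemHolderDisc (k + 1) β (cauchyGreen f) ∧
        holderNorm (k + 1) β (cauchyGreen f) ≤ M₀ * holderNorm k β f) :
    ∃ M > 0, ∀ b : ℂ, b ≠ 0 → ‖b‖ ≤ b₀ →
      (∀ f : ℂ → ℂ, MemHolderDisc k β f →
        MemHolderDisc (k + 1) β (cauchyGreenMod b f) ∧
          holderNorm (k + 1) β (cauchyGreenMod b f) ≤ M * holderNorm k β f) ∧
      (∀ f g : ℂ → ℂ,
        (∀ z : ℂ, IntegrableOn (fun ζ => f ζ / (z - ζ)) (ball (0 : ℂ) 1)) →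
        (∀ z : ℂ, IntegrableOn (fun ζ => g ζ / (z - ζ)) (ball (0 : ℂ) 1)) →
        ∀ z : ℂ, cauchyGreenMod b (f + g) z = cauchyGreenMod b f z + cauchyGreenMod b g z) ∧
      (∀ (a : ℂ) (f : ℂ → ℂ) (z : ℂ),
        cauchyGreenMod b (a • f) z = a * cauchyGreenMod b f z) := by
  obtain ⟨M₀, hM₀, hT⟩ := hVekua
  refine ⟨3 * M₀, by positivity, fun b _ hb => ⟨fun f hf => ?_,
    fun f g hf hg => cauchyGreenMod_add b hf hg, cauchyGreenMod_smul b⟩⟩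
  obtain ⟨hTf, hTf_norm⟩ := hT f hf
  obtain ⟨hmem, hnorm⟩ := cauchyGreenMod_memHolderDisc hTf (hb.trans hb₀1.le)
  exact ⟨hmem, by linarith⟩

/-- For `|b| ≤ b₀ < 1`, `b ≠ 0`, the modified Cauchy–Green operator
`T_{0,b}` is a bounded linear operator `C^{k,β}(cl 𝔻) → C^{k+1,β}(cl 𝔻)` with operator
norm bounded uniformly in `b`; boundedness of `T` itself (Vekua's theorem) is the given
hypothesis. -/
theorem cauchyGreenMod_bounded
    (k : ℕ) (β b₀ : ℝ) (hβ0 : 0 < β) (hβ1 : β < 1) (hb₀0 : 0 < b₀) (hb₀1 : b₀ < 1)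
    (hVekua : ∃ M₀ > 0, ∀ f : ℂ → ℂ, MemHolderDisc k β f →
      MemHolderDisc (k + 1) β (cauchyGreen f) ∧
        holderNorm (k + 1) β (cauchyGreen f) ≤ M₀ * holderNorm k β f) :
    ∃ M > 0, ∀ b : ℂ, b ≠ 0 → ‖b‖ ≤ b₀ →
      (∀ f : ℂ → ℂ, MemHolderDisc k β f →
        MemHolderDisc (k + 1) β (cauchyGreenMod b f) ∧
          holderNorm (k + 1) β (cauchyGreenMod b f) ≤ M * holderNorm k β f) ∧
      (∀ f g : ℂ → ℂ,
        (∀ z : ℂ, IntegrableOn (fun ζ => f ζ / (z - ζ)) (ball (0 : ℂ) 1)) →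
        (∀ z : ℂ, IntegrableOn (fun ζ => g ζ / (z - ζ)) (ball (0 : ℂ) 1)) →
        ∀ z : ℂ, cauchyGreenMod b (f + g) z = cauchyGreenMod b f z + cauchyGreenMod b g z) ∧
      (∀ (a : ℂ) (f : ℂ → ℂ) (z : ℂ),
        cauchyGreenMod b (a • f) z = a * cauchyGreenMod b f z) :=
  cauchyGreenMod_bounded_general k β b₀ hb₀1 hVekua
end

section
/- Let X, Y be Banach spaces, D a direct-sum decomposition Y = F ⊕ R where R is a closed subspace and F is finite-dimensional spanned by vectors p₁,…,p_N. Then for any sufficiently small perturbations p̃₁,…,p̃_N of p₁,…,p_N, one still has Y = Span(p̃₁,…,p̃_N) ⊕ R. -/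
/-!
Since `R` is closed, `Y ⧸ R` is a normed space, and `Y = span p ⊕ R` says that the images of
the `p j` form a basis of `Y ⧸ R`, which is therefore `N`-dimensional. Conversely, `span q` is a
complement of `R` as soon as the images of the `q j` are linearly independent in `Y ⧸ R`. Linear
independence of finitely many vectors is an open condition in a normed space, and the quotient
map is continuous, so it persists for all `q` close enough to `p`.
-/

open Module Submodule Set Topology

namespace Submodule

section Ring

variable {K M ι : Type*} [Ring K] [AddCommGroup M] [Module K M] {R : Submodule K M} {v : ι → M}

theorem linearIndependent_mkQ_comp (hv : LinearIndependent K v)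
    (h : Disjoint (span K (range v)) R) : LinearIndependent K (R.mkQ ∘ v) :=
  hv.map (by rwa [ker_mkQ])

theorem span_range_mkQ_comp_eq_top_iff :
    span K (range (R.mkQ ∘ v)) = ⊤ ↔ Codisjoint (span K (range v)) R := by
  rw [range_comp, ← map_span, map_mkQ_eq_top, sup_comm, codisjoint_iff]

noncomputable def quotientBasisOfIsCompl (hv : LinearIndependent K v)
    (h : IsCompl (span K (range v)) R) : Basis ι K (M ⧸ R) :=
  .mk (linearIndependent_mkQ_comp hv h.disjoint) (span_range_mkQ_comp_eq_top_iff.2 h.codisjoint).ge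

theorem disjoint_span_range_of_linearIndependent_mkQ_comp [Fintype ι]
    (hli : LinearIndependent K (R.mkQ ∘ v)) : Disjoint (span K (range v)) R := by
  rw [disjoint_def]
  rintro _ hx hxR
  obtain ⟨c, rfl⟩ := (mem_span_range_iff_exists_fun K).1 hx
  have hc : ∑ i, c i • (R.mkQ ∘ v) i = 0 := by
    simpa only [map_sum, map_smul, Function.comp_apply] using
      (R.mkQ_apply _).trans ((Quotient.mk_eq_zero R).2 hxR)
  simp [Fintype.linearIndependent_iff.1 hli c hc]

end Ring

theorem isCompl_span_range_of_linearIndependent_mkQ_comp {K M ι : Type*} [DivisionRing K]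
    [AddCommGroup M] [Module K M] [Fintype ι] {R : Submodule K M} [FiniteDimensional K (M ⧸ R)]
    {v : ι → M} (hli : LinearIndependent K (R.mkQ ∘ v))
    (hcard : Fintype.card ι = finrank K (M ⧸ R)) : IsCompl (span K (range v)) R :=
  ⟨disjoint_span_range_of_linearIndependent_mkQ_comp hli,
    span_range_mkQ_comp_eq_top_iff.1 (hli.span_eq_top_of_card_eq_finrank' hcard)⟩

end Submodule

theorem exists_pos_forall_norm_sub_lt_of_eventually_nhds {ι E : Type*} [Fintype ι]
    [SeminormedAddCommGroup E] {P : (ι → E) → Prop} {p : ι → E} (h : ∀ᶠ q in 𝓝 p, P q) :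
    ∃ ε > 0, ∀ q : ι → E, (∀ j, ‖q j - p j‖ < ε) → P q := by
  obtain ⟨ε, hε, hball⟩ := Metric.eventually_nhds_iff.1 h
  refine ⟨ε, hε, fun q hq => hball ((dist_pi_lt_iff hε).2 fun j => ?_)⟩
  rw [dist_eq_norm]
  exact hq j

theorem complement_stable_under_perturbation_general
    (Y : Type*) [NormedAddCommGroup Y] [NormedSpace ℝ Y]
    (R : Submodule ℝ Y) (hR : IsClosed (R : Set Y))
    (N : ℕ) (p : Fin N → Y) (hpind : LinearIndependent ℝ p)
    (hcompl : IsCompl (Submodule.span ℝ (Set.range p)) R) :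
    ∃ ε > 0, ∀ q : Fin N → Y, (∀ j, ‖q j - p j‖ < ε) →
      IsCompl (Submodule.span ℝ (Set.range q)) R := by
  let b : Basis (Fin N) ℝ (Y ⧸ R) := quotientBasisOfIsCompl hpind hcompl
  have : FiniteDimensional ℝ (Y ⧸ R) := .of_basis b
  have hmkQ : Continuous fun q : Fin N → Y => R.mkQ ∘ q :=
    continuous_pi fun j => R.continuous_mkQ.comp (continuous_apply j)
  obtain ⟨ε, hε, hindep⟩ := exists_pos_forall_norm_sub_lt_of_eventually_nhds
    (hmkQ.continuousAt.eventually (linearIndependent_mkQ_comp hpind hcompl.disjoint).eventually)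
  refine ⟨ε, hε, fun q hq => isCompl_span_range_of_linearIndependent_mkQ_comp (hindep q hq) ?_⟩
  rw [finrank_eq_card_basis b]

/-- Stability of a finite-dimensional complement: if `Y = F ⊕ R` with `R`
a closed subspace of a Banach space `Y` and `F` spanned by the (independent) vectors
`p₁, …, p_N`, then for all sufficiently small perturbations `q_j` of the `p_j` one still
has `Y = Span(q₁, …, q_N) ⊕ R`. -/
theorem complement_stable_under_perturbation
    (Y : Type*) [NormedAddCommGroup Y] [NormedSpace ℝ Y] [CompleteSpace Y]
    (R : Submodule ℝ Y) (hR : IsClosed (R : Set Y))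
    (N : ℕ) (p : Fin N → Y) (hpind : LinearIndependent ℝ p)
    (hcompl : IsCompl (Submodule.span ℝ (Set.range p)) R) :
    ∃ ε > 0, ∀ q : Fin N → Y, (∀ j, ‖q j - p j‖ < ε) →
      IsCompl (Submodule.span ℝ (Set.range q)) R :=
  complement_stable_under_perturbation_general Y R hR N p hpind hcompl
end
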